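/- arXiv:2401.14531 — 6 statements merged into one kernel-verified Lean document; each statement's English description precedes it below -/
import Mathlib

section
/- Let n ≥ 1 be a natural number and p, q ∈ (0,1). Set ϱ := q/(p+q), s₀ := n·ϱ, and s₁ := n·ϱ·(1−p) + (n²−n)·ϱ². Then p = (s₀ − s₁ + (1 − 1/n)·s₀²)/s₀ and q = (s₀ − s₁ + (1 − 1/n)·s₀²)/(n − s₀). -/
theorem stmt_5 (n : ℕ) (hn : 1 ≤ n) (p q : ℝ)
    (hp : p ∈ Set.Ioo (0:ℝ) 1) (hq : q ∈ Set.Ioo (0:ℝ) 1)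
    (ϱ s₀ s₁ : ℝ) (hϱ : ϱ = q / (p + q)) (hs₀ : s₀ = n * ϱ)
    (hs₁ : s₁ = n * ϱ * (1 - p) + ((n : ℝ) ^ 2 - n) * ϱ ^ 2) :
    p = (s₀ - s₁ + (1 - 1 / n) * s₀ ^ 2) / s₀ ∧
      q = (s₀ - s₁ + (1 - 1 / n) * s₀ ^ 2) / (n - s₀) := by
  obtain ⟨hp0, hp1⟩ := hp
  obtain ⟨hq0, hq1⟩ := hq
  have hpq : 0 < p + q := by linarith
  have hn0 : (0:ℝ) < n := by exact_mod_cast hn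
  have hϱ0 : 0 < ϱ := by rw [hϱ]; positivity
  have hϱ1 : ϱ < 1 := by
    rw [hϱ, div_lt_one hpq]; linarith
  have hs₀0 : 0 < s₀ := by rw [hs₀]; positivity
  have hns : s₀ < n := by
    rw [hs₀]; nlinarith
  have hnum : s₀ - s₁ + (1 - 1 / n) * s₀ ^ 2 = n * ϱ * p := by
    rw [hs₀, hs₁]; field_simp; ring
  constructor
  · rw [hnum, hs₀, eq_div_iff (by positivity)]; ring
  · rw [hnum, eq_div_iff (by linarith)]
    rw [hs₀, hϱ]; field_simp; ring
end

section
/- Let n ≥ 1 be a natural number and α, β > 1 real numbers. Put a := ∑'_{i≥1} i^(−α), b := ∑'_{i≥1} i^(−β), ϱ := a/(a+b), s₀ := n·ϱ, and s₁ := n·ϱ·(1 − 1/a) + (n²−n)·ϱ². Then a = s₀/(s₀ − s₁ + (1 − 1/n)·s₀²) and b = (n − s₀)/(s₀ − s₁ + (1 − 1/n)·s₀²). -/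
lemma aux_pos (γ : ℝ) (hγ : 1 < γ) : 0 < ∑' i : ℕ, ((i : ℝ) + 1) ^ (-γ) := by
  have hsum : Summable (fun i : ℕ => ((i : ℝ) + 1) ^ (-γ)) := by
    have h := (Real.summable_nat_rpow (p := -γ)).2 (by linarith)
    have h2 := (summable_nat_add_iff 1).2 h
    simpa [Nat.cast_add] using h2
  refine Summable.tsum_pos hsum (fun i => Real.rpow_nonneg (by positivity) _) 0 ?_
  positivity

theorem stmt_6 (n : ℕ) (hn : 1 ≤ n) (α β : ℝ) (hα : 1 < α) (hβ : 1 < β)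
    (a b ϱ s₀ s₁ : ℝ)
    (ha : a = ∑' i : ℕ, ((i : ℝ) + 1) ^ (-α))
    (hb : b = ∑' i : ℕ, ((i : ℝ) + 1) ^ (-β))
    (hϱ : ϱ = a / (a + b)) (hs₀ : s₀ = n * ϱ)
    (hs₁ : s₁ = n * ϱ * (1 - 1 / a) + ((n : ℝ) ^ 2 - n) * ϱ ^ 2) :
    a = s₀ / (s₀ - s₁ + (1 - 1 / n) * s₀ ^ 2) ∧
      b = (n - s₀) / (s₀ - s₁ + (1 - 1 / n) * s₀ ^ 2) := by
  have hapos : 0 < a := ha ▸ aux_pos α hα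
  have hbpos : 0 < b := hb ▸ aux_pos β hβ
  have habpos : 0 < a + b := by linarith
  have hnpos : (0:ℝ) < n := by exact_mod_cast hn
  have hϱpos : 0 < ϱ := by rw [hϱ]; positivity
  have hD : s₀ - s₁ + (1 - 1 / n) * s₀ ^ 2 = n * ϱ / a := by
    rw [hs₀, hs₁]
    field_simp
    ring
  constructor
  · rw [hD, hs₀]
    field_simp
  · rw [hD, hs₀, hϱ]
    field_simp
    ring
end

section
/- Let n ≥ 1 be a natural number, C > 0, α > 1, q ∈ (0,1). Put z := ∑'_{i≥1} C^α/(C+(i−1))^α, w := (C/(C+1))^α, ϱ := z/(z + 1/q), s₀ := n·ϱ, s₁ := n·ϱ·(1 − 1/z) + (n²−n)·ϱ², and s₂ := s₁ + n·ϱ·(q/z − w/z). Then q = (s₀ − s₁ + (1 − 1/n)·s₀²)/(n − s₀), z = s₀/(s₀ − s₁ + (1 − 1/n)·s₀²), and w = q − (s₂ − s₁)/(s₀ − s₁ + (1 − 1/n)·s₀²). -/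
lemma aux_summable (C α : ℝ) (hC : 0 < C) (hα : 1 < α) :
    Summable (fun i : ℕ => C ^ α / (C + (i : ℝ)) ^ α) := by
  rw [← summable_nat_add_iff 1]
  have hsum : Summable (fun i : ℕ => C ^ α / ((i : ℝ) + 1) ^ α) := by
    simp only [div_eq_mul_inv]
    apply Summable.mul_left
    have := (Real.summable_nat_rpow_inv (p := α)).mpr (by linarith)
    rw [← summable_nat_add_iff 1] at this
    simpa using this
  refine hsum.of_nonneg_of_le (fun i => by positivity) (fun i => ?_)
  have h1 : ((i:ℝ) + 1) ^ α ≤ (C + ((i:ℕ)+1 : ℕ)) ^ α := by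
    apply Real.rpow_le_rpow (by positivity) (by push_cast; linarith) (by linarith)
  exact div_le_div_of_nonneg_left (by positivity) (by positivity) h1

lemma aux_z_ge_one (C α : ℝ) (hC : 0 < C) (hα : 1 < α) :
    1 ≤ ∑' i : ℕ, C ^ α / (C + (i : ℝ)) ^ α := by
  have h := Summable.le_tsum (aux_summable C α hC hα) 0 (fun i _ => by positivity)
  simpa [div_self (ne_of_gt (Real.rpow_pos_of_pos hC α))] using h

theorem stmt_7 (n : ℕ) (hn : 1 ≤ n) (C α q : ℝ) (hC : 0 < C) (hα : 1 < α)
    (hq : q ∈ Set.Ioo (0:ℝ) 1) (z w ϱ s₀ s₁ s₂ : ℝ)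
    (hz : z = ∑' i : ℕ, C ^ α / (C + (i : ℝ)) ^ α)
    (hw : w = (C / (C + 1)) ^ α)
    (hϱ : ϱ = z / (z + 1 / q)) (hs₀ : s₀ = n * ϱ)
    (hs₁ : s₁ = n * ϱ * (1 - 1 / z) + ((n : ℝ) ^ 2 - n) * ϱ ^ 2)
    (hs₂ : s₂ = s₁ + n * ϱ * (q / z - w / z)) :
    q = (s₀ - s₁ + (1 - 1 / n) * s₀ ^ 2) / (n - s₀) ∧
      z = s₀ / (s₀ - s₁ + (1 - 1 / n) * s₀ ^ 2) ∧
      w = q - (s₂ - s₁) / (s₀ - s₁ + (1 - 1 / n) * s₀ ^ 2) := by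
  obtain ⟨hq0, hq1⟩ := hq
  have hz1 : 1 ≤ z := hz ▸ aux_z_ge_one C α hC hα
  have hz0 : (0:ℝ) < z := by linarith
  have hzq : (0:ℝ) < z + 1/q := by positivity
  have hn0 : (0:ℝ) < n := by exact_mod_cast hn
  have hϱ0 : 0 < ϱ := by rw [hϱ]; positivity
  have hϱ1 : ϱ < 1 := by
    rw [hϱ, div_lt_one hzq]; nlinarith [one_div_pos.mpr hq0]
  have hD : s₀ - s₁ + (1 - 1/n) * s₀ ^ 2 = n * ϱ / z := by
    rw [hs₁, hs₀]; field_simp; ring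
  have hD0 : (0:ℝ) < n * ϱ / z := by positivity
  have hns : (0:ℝ) < n - s₀ := by rw [hs₀]; nlinarith
  refine ⟨?_, ?_, ?_⟩
  · rw [hD, eq_div_iff (ne_of_gt hns), hs₀, hϱ]
    field_simp
    ring
  · rw [hD, hs₀, eq_div_iff (ne_of_gt hD0)]
    field_simp
  · rw [hD, hs₂]
    field_simp
    ring
end

section
/- Let V be a finite set with |V| = N ≥ 3, and let ϱ, c ∈ [0,1]. Let (B_e, C_e), indexed by the 2-element subsets e of V, be an independent family of pairs of random variables with values in {0,1}², such that for every e one has E[B_e] = E[C_e] = ϱ and E[B_e·C_e] = c. Let T_B := ∑ over 3-element subsets {i,j,k} of V of B_{{i,j}}·B_{{i,k}}·B_{{j,k}}, and define T_C analogously from the C_e. Then E[T_B·T_C] = C(N,3)·( (C(N−3,3) + 3·C(N−3,2))·ϱ⁶ + 3·(N−3)·c·ϱ⁴ + c³ ). -/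
/-!
Expanding the product, `E[T_B T_C]` is a double sum over pairs of triangles `(s, t)`. By
independence across edges the term of `(s, t)` factorises edgewise: a common edge contributes
`E[B_e C_e] = c`, every other edge `ϱ`, so with `j = |s ∩ t|` the term is
`c ^ (j choose 2) * ϱ ^ (6 - 2 * (j choose 2))`. For a fixed triangle `s` exactly
`(3 choose j) * (N - 3 choose 3 - j)` triangles `t` meet it in `j` vertices; summing over
`j ≤ 3` gives the bracket, and summing over the `N choose 3` triangles `s` the prefactor.
-/

open MeasureTheory ProbabilityTheory Finset

section Counting

variable {α : Type*} [Fintype α] [DecidableEq α]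

theorem card_filter_card_inter_eq (s : Finset α) {m j : ℕ} (hj : j ≤ m) :
    #{t ∈ powersetCard m univ | #(s ∩ t) = j} =
      (#s).choose j * (Fintype.card α - #s).choose (m - j) := by
  have split_union {a b : Finset α} (ha : a ⊆ s) (hb : Disjoint b s) :
      s ∩ (a ∪ b) = a ∧ (a ∪ b) \ s = b := by
    rw [inter_union_distrib_left, union_sdiff_distrib, inter_eq_right.2 ha,
      disjoint_iff_inter_eq_empty.1 hb.symm, sdiff_eq_empty_iff_subset.2 ha, hb.sdiff_eq_left,
      union_empty, empty_union]
    exact ⟨rfl, rfl⟩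
  rw [← card_compl, ← card_powersetCard, ← card_powersetCard, ← card_product]
  refine card_nbij' (fun t => (s ∩ t, t \ s)) (fun p => p.1 ∪ p.2) ?_ ?_ ?_ ?_
  · intro t ht
    simp only [coe_filter, mem_powersetCard, subset_univ, true_and, Set.mem_ofPred_eq] at ht
    simp only [coe_product, Set.mem_prod, mem_coe, mem_powersetCard, inter_subset_left,
      subset_compl_iff_disjoint_right, sdiff_disjoint, true_and]
    have := card_sdiff_add_card_inter t s
    rw [inter_comm] at this
    omega
  · rintro ⟨a, b⟩ hp
    simp only [coe_product, Set.mem_prod, mem_coe, mem_powersetCard,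
      subset_compl_iff_disjoint_right] at hp
    obtain ⟨⟨ha, rfl⟩, hb, hjb⟩ := hp
    simp only [coe_filter, mem_powersetCard, subset_univ, true_and, Set.mem_ofPred_eq,
      (split_union ha hb).1, card_union_of_disjoint (hb.mono_right ha).symm, and_true]
    omega
  · intro t _
    dsimp only
    rw [union_comm, inter_comm, sdiff_union_inter]
  · rintro ⟨a, b⟩ hp
    simp only [coe_product, Set.mem_prod, mem_coe, mem_powersetCard,
      subset_compl_iff_disjoint_right] at hp
    obtain ⟨⟨ha, -⟩, hb, -⟩ := hp
    dsimp only
    rw [(split_union ha hb).1, (split_union ha hb).2]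

theorem sum_powersetCard_comp_card_inter {M : Type*} [AddCommMonoid M] (s : Finset α) (m : ℕ)
    (f : ℕ → M) :
    ∑ t ∈ powersetCard m univ, f #(s ∩ t) =
      ∑ j ∈ range (m + 1), ((#s).choose j * (Fintype.card α - #s).choose (m - j)) • f j := by
  have hmaps : ∀ t ∈ powersetCard m univ, #(s ∩ t) ∈ range (m + 1) := fun t ht => by
    rw [mem_range, Nat.lt_succ_iff, ← (mem_powersetCard.1 ht).2]
    exact card_le_card inter_subset_right
  rw [← sum_fiberwise_of_maps_to hmaps]
  refine sum_congr rfl fun j hj => ?_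
  rw [← card_filter_card_inter_eq s (Nat.lt_succ_iff.1 (mem_range.1 hj)), ← sum_const]
  exact sum_congr rfl fun t ht => by rw [(mem_filter.1 ht).2]

theorem sum_powersetCard_three_pow_choose_two_card_inter {N : ℕ} (hα : Fintype.card α = N)
    (hN : 3 ≤ N) (ϱ c : ℝ) {s : Finset α} (hs : #s = 3) :
    ∑ t ∈ powersetCard 3 univ, c ^ (#(s ∩ t)).choose 2 * ϱ ^ (6 - 2 * (#(s ∩ t)).choose 2) =
      (((N - 3).choose 3 : ℝ) + 3 * ((N - 3).choose 2 : ℝ)) * ϱ ^ 6 +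
        3 * ((N : ℝ) - 3) * c * ϱ ^ 4 + c ^ 3 := by
  rw [sum_powersetCard_comp_card_inter s 3 fun j => c ^ j.choose 2 * ϱ ^ (6 - 2 * j.choose 2),
    hs, hα]
  simp only [Nat.reduceAdd, nsmul_eq_mul, Nat.cast_mul, sum_range_succ, range_one,
    sum_singleton, Nat.choose, Nat.cast_one, tsub_zero, one_mul, pow_zero, mul_zero,
    add_zero, Nat.cast_ofNat, Nat.add_one_sub_one, Nat.reduceSub, Nat.choose_one_right,
    Nat.cast_sub hN, pow_one, mul_one, tsub_self, Nat.choose_zero_right, Nat.reduceMul,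
    add_left_inj]
  ring

end Counting

section Integrals

variable {Ω ι : Type*} [MeasurableSpace Ω] {P : Measure Ω} {X Y : ι → Ω → ℝ}

theorem integral_sum_mul_sum {κ : Type*} {f : ι → Ω → ℝ} {g : κ → Ω → ℝ} {S : Finset ι}
    {T : Finset κ} (hfg : ∀ i ∈ S, ∀ j ∈ T, Integrable (fun ω => f i ω * g j ω) P) :
    ∫ ω, (∑ i ∈ S, f i ω) * ∑ j ∈ T, g j ω ∂P = ∑ i ∈ S, ∑ j ∈ T, ∫ ω, f i ω * g j ω ∂P := by
  simp_rw [sum_mul_sum]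
  rw [integral_finsetSum S fun i hi => integrable_finsetSum T (hfg i hi)]
  exact sum_congr rfl fun i hi => integral_finsetSum T (hfg i hi)

theorem integrable_prod_mul_prod [IsFiniteMeasure P] {S T : Finset ι}
    (hXm : ∀ i ∈ S, Measurable (X i)) (hYm : ∀ i ∈ T, Measurable (Y i))
    (hX : ∀ i ∈ S, ∀ ω, X i ω ∈ unitInterval) (hY : ∀ i ∈ T, ∀ ω, Y i ω ∈ unitInterval) :
    Integrable (fun ω => (∏ i ∈ S, X i ω) * ∏ i ∈ T, Y i ω) P :=
  Integrable.of_mem_Icc 0 1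
    ((Finset.measurable_prod S hXm).mul (Finset.measurable_prod T hYm)).aemeasurable
    (ae_of_all _ fun ω => unitInterval.mul_mem (unitInterval.prod_mem fun i hi => hX i hi ω)
      (unitInterval.prod_mem fun i hi => hY i hi ω))

variable [Fintype ι] [DecidableEq ι]

theorem ProbabilityTheory.iIndepFun.integral_prod_mul_prod
    (hindep : iIndepFun (fun i ω => (X i ω, Y i ω)) P) (hXm : ∀ i, Measurable (X i))
    (hYm : ∀ i, Measurable (Y i)) (S T : Finset ι) :
    ∫ ω, (∏ i ∈ S, X i ω) * ∏ i ∈ T, Y i ω ∂P =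
      ∏ i, ∫ ω, (if i ∈ S then X i ω else 1) * (if i ∈ T then Y i ω else 1) ∂P := by
  have hprod : ∀ ω, (∏ i ∈ S, X i ω) * ∏ i ∈ T, Y i ω =
      ∏ i, (if i ∈ S then X i ω else 1) * (if i ∈ T then Y i ω else 1) := fun ω => by
    rw [prod_mul_distrib, prod_ite_mem, prod_ite_mem, univ_inter, univ_inter]
  simp_rw [hprod]
  exact hindep.integral_fun_prod_comp
    (f := fun i p => (if i ∈ S then p.1 else 1) * (if i ∈ T then p.2 else 1))
    (fun i => ((hXm i).prodMk (hYm i)).aemeasurable) (fun i => by split_ifs <;> fun_prop)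

theorem ProbabilityTheory.iIndepFun.integral_prod_mul_prod_eq_pow [IsProbabilityMeasure P]
    {ϱ c : ℝ} (hindep : iIndepFun (fun i ω => (X i ω, Y i ω)) P) (hXm : ∀ i, Measurable (X i))
    (hYm : ∀ i, Measurable (Y i)) (hEX : ∀ i, ∫ ω, X i ω ∂P = ϱ) (hEY : ∀ i, ∫ ω, Y i ω ∂P = ϱ)
    (hEXY : ∀ i, ∫ ω, X i ω * Y i ω ∂P = c) (S T : Finset ι) :
    ∫ ω, (∏ i ∈ S, X i ω) * ∏ i ∈ T, Y i ω ∂P = c ^ #(S ∩ T) * ϱ ^ (#(S \ T) + #(T \ S)) := by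
  have hfactor : ∀ i, ∫ ω, (if i ∈ S then X i ω else 1) * (if i ∈ T then Y i ω else 1) ∂P =
      (if i ∈ S ∩ T then c else 1) *
        ((if i ∈ S \ T then ϱ else 1) * (if i ∈ T \ S then ϱ else 1)) := fun i => by
    by_cases hS : i ∈ S <;> by_cases hT : i ∈ T <;> simp [hS, hT, hEX, hEY, hEXY]
  simp only [hindep.integral_prod_mul_prod hXm hYm, hfactor, prod_mul_distrib, prod_ite_mem,
    univ_inter, prod_const, pow_add]

end Integrals

section Hyperedges

variable {V Ω : Type*} [MeasurableSpace Ω] {P : Measure Ω}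

theorem card_subtype_powersetCard (s : Finset V) (k : ℕ) :
    #((s.powersetCard k).subtype (#· = k)) = (#s).choose k := by
  rw [card_subtype, filter_true_of_mem fun e he => (mem_powersetCard.1 he).2, card_powersetCard]

theorem subtype_powersetCard_inter [DecidableEq V] (s t : Finset V) (k : ℕ) :
    (s.powersetCard k).subtype (#· = k) ∩ (t.powersetCard k).subtype (#· = k) =
      ((s ∩ t).powersetCard k).subtype (#· = k) := by
  ext e
  simp only [mem_inter, mem_subtype, mem_powersetCard, subset_inter_iff]
  tauto

theorem ProbabilityTheory.iIndepFun.integral_prod_powersetCard_mul_prod_powersetCard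
    [Fintype V] [DecidableEq V] [IsProbabilityMeasure P] {k : ℕ} {ϱ c : ℝ}
    {B C : Finset V → Ω → ℝ}
    (hBm : ∀ e : Finset V, #e = k → Measurable (B e))
    (hCm : ∀ e : Finset V, #e = k → Measurable (C e))
    (hindep : iIndepFun (fun e : {e : Finset V // #e = k} => fun ω => (B e.1 ω, C e.1 ω)) P)
    (hEB : ∀ e : Finset V, #e = k → ∫ ω, B e ω ∂P = ϱ)
    (hEC : ∀ e : Finset V, #e = k → ∫ ω, C e ω ∂P = ϱ)
    (hEBC : ∀ e : Finset V, #e = k → ∫ ω, B e ω * C e ω ∂P = c) (s t : Finset V) :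
    ∫ ω, (∏ e ∈ s.powersetCard k, B e ω) * ∏ e ∈ t.powersetCard k, C e ω ∂P =
      c ^ (#(s ∩ t)).choose k *
        ϱ ^ ((#s).choose k + (#t).choose k - 2 * (#(s ∩ t)).choose k) := by
  have hprod_subtype (u : Finset V) (f : Finset V → ℝ) :
      ∏ e ∈ (u.powersetCard k).subtype (#· = k), f e = ∏ e ∈ u.powersetCard k, f e :=
    prod_subtype_of_mem f fun e he => (mem_powersetCard.1 he).2
  have hs : (#(s ∩ t)).choose k ≤ (#s).choose k :=
    Nat.choose_le_choose k (card_le_card inter_subset_left)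
  have ht : (#(s ∩ t)).choose k ≤ (#t).choose k :=
    Nat.choose_le_choose k (card_le_card inter_subset_right)
  simp_rw [← hprod_subtype]
  rw [hindep.integral_prod_mul_prod_eq_pow (fun e => hBm e.1 e.2) (fun e => hCm e.1 e.2)
    (fun e => hEB e.1 e.2) (fun e => hEC e.1 e.2) (fun e => hEBC e.1 e.2), card_sdiff,
    card_sdiff, inter_comm ((t.powersetCard k).subtype _), subtype_powersetCard_inter,
    card_subtype_powersetCard, card_subtype_powersetCard, card_subtype_powersetCard]
  congr 2
  omega

end Hyperedges

theorem stmt_11_general {Ω : Type*} [MeasurableSpace Ω] (P : Measure Ω) [IsProbabilityMeasure P]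
    (V : Type*) [Fintype V] (N : ℕ) (hV : Fintype.card V = N)
    (hN : 3 ≤ N) (ϱ c : ℝ)
    (B C : Finset V → Ω → ℝ)
    (hBmeas : ∀ e : Finset V, e.card = 2 → Measurable (B e))
    (hCmeas : ∀ e : Finset V, e.card = 2 → Measurable (C e))
    (hB01 : ∀ e : Finset V, e.card = 2 → ∀ ω, B e ω = 0 ∨ B e ω = 1)
    (hC01 : ∀ e : Finset V, e.card = 2 → ∀ ω, C e ω = 0 ∨ C e ω = 1)
    (hindep : iIndepFun
      (fun e : {e : Finset V // e.card = 2} => fun ω => (B e.1 ω, C e.1 ω)) P)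
    (hEB : ∀ e : Finset V, e.card = 2 → ∫ ω, B e ω ∂P = ϱ)
    (hEC : ∀ e : Finset V, e.card = 2 → ∫ ω, C e ω ∂P = ϱ)
    (hEBC : ∀ e : Finset V, e.card = 2 → ∫ ω, B e ω * C e ω ∂P = c) :
    ∫ ω, (∑ t ∈ Finset.univ.powersetCard 3, ∏ e ∈ t.powersetCard 2, B e ω) *
        (∑ t ∈ Finset.univ.powersetCard 3, ∏ e ∈ t.powersetCard 2, C e ω) ∂P
      = (N.choose 3 : ℝ) *
        ((((N - 3).choose 3 : ℝ) + 3 * ((N - 3).choose 2 : ℝ)) * ϱ ^ 6 +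
          3 * ((N : ℝ) - 3) * c * ϱ ^ 4 + c ^ 3) := by
  classical
  have unit_of_01 {x : ℝ} (h : x = 0 ∨ x = 1) : x ∈ unitInterval := by
    rcases h with rfl | rfl <;> simp
  have hint (s t : Finset V) : Integrable
      (fun ω => (∏ e ∈ s.powersetCard 2, B e ω) * ∏ e ∈ t.powersetCard 2, C e ω) P :=
    integrable_prod_mul_prod
      (fun e he => hBmeas e (mem_powersetCard.1 he).2)
      (fun e he => hCmeas e (mem_powersetCard.1 he).2)
      (fun e he ω => unit_of_01 (hB01 e (mem_powersetCard.1 he).2 ω))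
      (fun e he ω => unit_of_01 (hC01 e (mem_powersetCard.1 he).2 ω))
  have hterm : ∀ s ∈ powersetCard 3 (univ : Finset V), ∀ t ∈ powersetCard 3 univ,
      ∫ ω, (∏ e ∈ s.powersetCard 2, B e ω) * ∏ e ∈ t.powersetCard 2, C e ω ∂P =
        c ^ (#(s ∩ t)).choose 2 * ϱ ^ (6 - 2 * (#(s ∩ t)).choose 2) := fun s hs t ht => by
    rw [hindep.integral_prod_powersetCard_mul_prod_powersetCard hBmeas hCmeas hEB hEC hEBC,
      (mem_powersetCard.1 hs).2, (mem_powersetCard.1 ht).2]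
    rfl -- `choose 3 2 + choose 3 2` reduces to `6`
  rw [integral_sum_mul_sum fun s _ t _ => hint s t,
    sum_congr rfl fun s hs => (sum_congr rfl (hterm s hs)).trans
      (sum_powersetCard_three_pow_choose_two_card_inter hV hN ϱ c (mem_powersetCard.1 hs).2),
    sum_const, card_powersetCard, card_univ, hV, nsmul_eq_mul]

theorem stmt_11 {Ω : Type*} [MeasurableSpace Ω] (P : Measure Ω) [IsProbabilityMeasure P]
    (V : Type*) [Fintype V] [DecidableEq V] (N : ℕ) (hV : Fintype.card V = N)
    (hN : 3 ≤ N) (ϱ c : ℝ) (hϱ : ϱ ∈ Set.Icc (0:ℝ) 1) (hc : c ∈ Set.Icc (0:ℝ) 1)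
    (B C : Finset V → Ω → ℝ)
    (hBmeas : ∀ e : Finset V, e.card = 2 → Measurable (B e))
    (hCmeas : ∀ e : Finset V, e.card = 2 → Measurable (C e))
    (hB01 : ∀ e : Finset V, e.card = 2 → ∀ ω, B e ω = 0 ∨ B e ω = 1)
    (hC01 : ∀ e : Finset V, e.card = 2 → ∀ ω, C e ω = 0 ∨ C e ω = 1)
    (hindep : iIndepFun
      (fun e : {e : Finset V // e.card = 2} => fun ω => (B e.1 ω, C e.1 ω)) P)
    (hEB : ∀ e : Finset V, e.card = 2 → ∫ ω, B e ω ∂P = ϱ)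
    (hEC : ∀ e : Finset V, e.card = 2 → ∫ ω, C e ω ∂P = ϱ)
    (hEBC : ∀ e : Finset V, e.card = 2 → ∫ ω, B e ω * C e ω ∂P = c) :
    ∫ ω, (∑ t ∈ Finset.univ.powersetCard 3, ∏ e ∈ t.powersetCard 2, B e ω) *
        (∑ t ∈ Finset.univ.powersetCard 3, ∏ e ∈ t.powersetCard 2, C e ω) ∂P
      = (N.choose 3 : ℝ) *
        ((((N - 3).choose 3 : ℝ) + 3 * ((N - 3).choose 2 : ℝ)) * ϱ ^ 6 +
          3 * ((N : ℝ) - 3) * c * ϱ ^ 4 + c ^ 3) :=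
  stmt_11_general P V N hV hN ϱ c B C hBmeas hCmeas hB01 hC01 hindep hEB hEC hEBC
end

section
/- Let V be a finite set with |V| = N ≥ 3, and let ϱ, c ∈ [0,1]. Let (B_e, C_e), indexed by the 2-element subsets e of V, be an independent family of pairs of random variables with values in {0,1}², such that for every e one has E[B_e] = E[C_e] = ϱ and E[B_e·C_e] = c. Let W_B := ∑ over vertices i ∈ V and 2-element subsets {j,k} of V∖{i} of B_{{i,j}}·B_{{i,k}}, and define W_C analogously from the C_e. Then E[W_B·W_C] = C(N,3)·( 9·(C(N−3,3) + 3·C(N−3,2))·ϱ⁴ + 15·(N−3)·ϱ⁴ + 12·(N−3)·ϱ²·c + 3·c² + 6·ϱ²·c ). -/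
/-!
Write `W_B = ∑_S ∏_{f ∈ S} B_f`, where `S` runs over the edge sets of the wedges; a wedge is
determined by its edge set, its center being the common vertex of the two edges. By independence
`E[∏_{f ∈ S} B_f ∏_{f ∈ T} C_f] = ϱ ^ #(S △ T) * c ^ #(S ∩ T)`, which for two-edge sets is
`ϱ⁴ + #(S ∩ T) (ϱ²c - ϱ⁴) + [S = T] (c - ϱ²)²`. Summing over pairs of wedges then only needs the
number `3 C(N, 3)` of wedges and, by double counting `∑_T #(S ∩ T)`, the number `2 (N - 2)` of
wedges through a given edge.
-/

open MeasureTheory ProbabilityTheory Finset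

namespace ProbabilityTheory

variable {Ω ι : Type*} {mΩ : MeasurableSpace Ω} {μ : Measure Ω}

theorem iIndepFun.integral_finset_prod_eq_prod_integral {𝕜 : Type*} [RCLike 𝕜]
    {X : ι → Ω → 𝕜} (hX : iIndepFun X μ) (mX : ∀ i, AEStronglyMeasurable (X i) μ)
    (s : Finset ι) : ∫ ω, ∏ i ∈ s, X i ω ∂μ = ∏ i ∈ s, ∫ ω, X i ω ∂μ := by
  simp_rw [← s.prod_coe_sort]
  exact (hX.precomp Subtype.val_injective).integral_fun_prod_eq_prod_integral fun i : s => mX i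

theorem integral_prod_mul_prod_of_iIndepFun [DecidableEq ι] {X Y : ι → Ω → ℝ}
    (hX : ∀ i, Measurable (X i)) (hY : ∀ i, Measurable (Y i))
    (hXY : iIndepFun (fun i ω => (X i ω, Y i ω)) μ) {a b c : ℝ}
    (ha : ∀ i, ∫ ω, X i ω ∂μ = a) (hb : ∀ i, ∫ ω, Y i ω ∂μ = b)
    (hc : ∀ i, ∫ ω, X i ω * Y i ω ∂μ = c) (S T : Finset ι) :
    ∫ ω, (∏ i ∈ S, X i ω) * ∏ i ∈ T, Y i ω ∂μ = a ^ #(S \ T) * b ^ #(T \ S) * c ^ #(S ∩ T) := by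
  set φ : ι → ℝ × ℝ → ℝ := fun i p => (if i ∈ S then p.1 else 1) * (if i ∈ T then p.2 else 1)
  have hφ : ∀ i, Measurable (φ i) := fun i => by
    apply Measurable.mul <;> split_ifs <;> fun_prop
  have hprod : ∀ ω, (∏ i ∈ S, X i ω) * ∏ i ∈ T, Y i ω = ∏ i ∈ S ∪ T, φ i (X i ω, Y i ω) := by
    intro ω
    rw [prod_mul_distrib, prod_ite_mem, prod_ite_mem, union_inter_cancel_left,
      union_inter_cancel_right]
  have hfactor : ∀ i ∈ S ∪ T, ∫ ω, φ i (X i ω, Y i ω) ∂μ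
      = if i ∈ S then (if i ∈ T then c else a) else b := by
    intro i hi
    by_cases hS : i ∈ S <;> by_cases hT : i ∈ T <;> simp_all [φ]
  have hind := (hXY.comp φ hφ).integral_finset_prod_eq_prod_integral
    (fun i => ((hφ i).comp ((hX i).prodMk (hY i))).aestronglyMeasurable) (S ∪ T)
  simp only [Function.comp_apply] at hind
  simp_rw [hprod]
  rw [hind, prod_congr rfl hfactor]
  simp only [prod_ite, prod_const, filter_mem_eq_inter, filter_notMem_eq_sdiff,
    union_inter_cancel_left, union_sdiff_left]
  ring

theorem integrable_prod_mul_prod_of_abs_le_one [IsFiniteMeasure μ] {X Y : ι → Ω → ℝ}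
    (hX : ∀ i, Measurable (X i)) (hY : ∀ i, Measurable (Y i))
    (hX1 : ∀ i ω, |X i ω| ≤ 1) (hY1 : ∀ i ω, |Y i ω| ≤ 1) (S T : Finset ι) :
    Integrable (fun ω => (∏ i ∈ S, X i ω) * ∏ i ∈ T, Y i ω) μ := by
  refine Integrable.of_bound (by fun_prop) 1 (ae_of_all _ fun ω => ?_)
  rw [norm_mul, norm_prod, norm_prod]
  exact mul_le_one₀ (prod_le_one (fun _ _ => norm_nonneg _) fun i _ => hX1 i ω)
    (prod_nonneg fun _ _ => norm_nonneg _)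
    (prod_le_one (fun _ _ => norm_nonneg _) fun i _ => hY1 i ω)

end ProbabilityTheory

section PairMoments

variable {α : Type*} [DecidableEq α]

-- The three values `ϱ⁴, ϱ²c, c²` at `#(S ∩ T) = 0, 1, 2`, written so that a sum over pairs splits
-- into counts.
theorem pow_card_sdiff_mul_pow_card_sdiff_mul_pow_card_inter {S T : Finset α}
    (hS : #S = 2) (hT : #T = 2) (ϱ c : ℝ) :
    ϱ ^ #(S \ T) * ϱ ^ #(T \ S) * c ^ #(S ∩ T)
      = ϱ ^ 4 + #(S ∩ T) * (ϱ ^ 2 * c - ϱ ^ 4) + if S = T then (c - ϱ ^ 2) ^ 2 else 0 := by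
  have hST : #(S \ T) + #(S ∩ T) = 2 := by rw [card_sdiff_add_card_inter, hS]
  have hTS : #(T \ S) + #(S ∩ T) = 2 := by rw [inter_comm, card_sdiff_add_card_inter, hT]
  have heq : S = T ↔ #(S ∩ T) = 2 := by
    refine ⟨fun h => by rw [h, inter_self, hT], fun h => ?_⟩
    have hinter : S ∩ T = S := eq_of_subset_of_card_le inter_subset_left (by rw [h, hS])
    exact eq_of_subset_of_card_le (inter_eq_left.1 hinter) (by rw [hS, hT])
  rw [if_congr heq rfl rfl, show #(S \ T) = 2 - #(S ∩ T) by omega,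
    show #(T \ S) = 2 - #(S ∩ T) by omega]
  obtain h | h | h : #(S ∩ T) = 0 ∨ #(S ∩ T) = 1 ∨ #(S ∩ T) = 2 := by omega
  all_goals
    simp only [h]
    norm_num only [Nat.cast_ofNat, Nat.cast_one, Nat.cast_zero, if_true, if_false]
    ring

theorem sum_sum_pow_card_sdiff_mul_pow_card_inter {𝒲 : Finset (Finset α)} {d : ℕ}
    (h𝒲 : ∀ S ∈ 𝒲, #S = 2) (hd : ∀ a, #{S ∈ 𝒲 | a ∈ S} = d) (ϱ c : ℝ) :
    ∑ S ∈ 𝒲, ∑ T ∈ 𝒲, ϱ ^ #(S \ T) * ϱ ^ #(T \ S) * c ^ #(S ∩ T)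
      = #𝒲 * (#𝒲 * ϱ ^ 4 + 2 * d * (ϱ ^ 2 * c - ϱ ^ 4) + (c - ϱ ^ 2) ^ 2) := by
  have hrow : ∀ S ∈ 𝒲, ∑ T ∈ 𝒲, ϱ ^ #(S \ T) * ϱ ^ #(T \ S) * c ^ #(S ∩ T)
      = #𝒲 * ϱ ^ 4 + 2 * d * (ϱ ^ 2 * c - ϱ ^ 4) + (c - ϱ ^ 2) ^ 2 := by
    intro S hS
    have hinter : ∑ T ∈ 𝒲, (#(S ∩ T) : ℝ) = 2 * d := by
      exact_mod_cast (sum_card_inter fun a _ => hd a).trans (by rw [h𝒲 S hS])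
    rw [sum_congr rfl fun T hT => pow_card_sdiff_mul_pow_card_sdiff_mul_pow_card_inter
      (h𝒲 S hS) (h𝒲 T hT) ϱ c, sum_add_distrib, sum_add_distrib, sum_const, ← sum_mul,
      sum_ite_eq, if_pos hS, nsmul_eq_mul, hinter]
  rw [sum_congr rfl hrow, sum_const, nsmul_eq_mul]

end PairMoments

theorem Finset.pair_right_injective {α : Type*} [DecidableEq α] (a : α) :
    Function.Injective fun b : α => ({a, b} : Finset α) := by
  intro b b' (h : ({a, b} : Finset α) = {a, b'})
  have hb : b ∈ ({a, b'} : Finset α) := by rw [← h]; simp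
  have hb' : b' ∈ ({a, b} : Finset α) := by rw [h]; simp
  simp only [mem_insert, mem_singleton] at hb hb'
  grind

section Wedges

variable {V : Type*} [DecidableEq V]

-- The subtype only retypes the edges `{i, j}` as indices of the edge family; nothing is dropped
-- when `i ∉ e`.
def wedgeEdges (i : V) (e : Finset V) : Finset {f : Finset V // #f = 2} :=
  (e.image fun j => ({i, j} : Finset V)).subtype (#· = 2)

theorem mem_wedgeEdges {i : V} {e : Finset V} {f : {f : Finset V // #f = 2}} :
    f ∈ wedgeEdges i e ↔ ∃ j ∈ e, {i, j} = f.1 := by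
  simp [wedgeEdges]

theorem mk_pair_mem_wedgeEdges {i j : V} {e : Finset V} (h : #({i, j} : Finset V) = 2) :
    ⟨{i, j}, h⟩ ∈ wedgeEdges i e ↔ j ∈ e := by
  simp only [mem_wedgeEdges, (pair_right_injective i).eq_iff, exists_eq_right]

theorem center_mem_of_mem_wedgeEdges {i : V} {e : Finset V} {f : {f : Finset V // #f = 2}}
    (hf : f ∈ wedgeEdges i e) : i ∈ f.1 := by
  obtain ⟨j, -, hj⟩ := mem_wedgeEdges.1 hf
  exact hj ▸ mem_insert_self i {j}

theorem eq_center_of_forall_mem_wedgeEdges {i x : V} {e : Finset V} (hi : i ∉ e) (he : #e = 2)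
    (hx : ∀ f ∈ wedgeEdges i e, x ∈ f.1) : x = i := by
  obtain ⟨j, k, hjk, rfl⟩ := card_eq_two.1 he
  have hmem : ∀ l ∈ ({j, k} : Finset V), x ∈ ({i, l} : Finset V) := fun l hl =>
    hx ⟨{i, l}, card_pair fun h => hi (h ▸ hl)⟩ ((mk_pair_mem_wedgeEdges _).2 hl)
  have hxj := hmem j (by simp)
  have hxk := hmem k (by simp)
  simp only [mem_insert, mem_singleton] at hxj hxk
  grind

theorem filter_card_eq_two_image_pair {i : V} {e : Finset V} (hi : i ∉ e) :
    {s ∈ e.image fun j => ({i, j} : Finset V) | #s = 2} = e.image fun j => {i, j} := by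
  refine filter_true_of_mem ?_
  simp only [mem_image]
  rintro _ ⟨j, hj, rfl⟩
  exact card_pair fun h => hi (h ▸ hj)

theorem prod_wedgeEdges {M : Type*} [CommMonoid M] {i : V} {e : Finset V} (hi : i ∉ e)
    (F : Finset V → M) : ∏ f ∈ wedgeEdges i e, F f.1 = ∏ j ∈ e, F {i, j} := by
  rw [wedgeEdges, prod_subtype_eq_prod_filter, filter_card_eq_two_image_pair hi,
    prod_image fun j _ k _ h => pair_right_injective i h]

theorem card_wedgeEdges {i : V} {e : Finset V} (hi : i ∉ e) : #(wedgeEdges i e) = #e := by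
  rw [wedgeEdges, card_subtype, filter_card_eq_two_image_pair hi,
    card_image_of_injective _ (pair_right_injective i)]

variable (V) [Fintype V]

def wedges : Finset (Σ _ : V, Finset V) :=
  univ.sigma fun i => (univ.erase i).powersetCard 2

variable {V}

theorem mem_wedges {w : Σ _ : V, Finset V} : w ∈ wedges V ↔ w.1 ∉ w.2 ∧ #w.2 = 2 := by
  simp [wedges, subset_erase]

theorem wedgeEdges_injOn :
    Set.InjOn (fun w : Σ _ : V, Finset V => wedgeEdges w.1 w.2) (wedges V) := by
  rintro ⟨i, e⟩ hw ⟨i', e'⟩ hw' (h : wedgeEdges i e = wedgeEdges i' e')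
  rw [mem_coe, mem_wedges] at hw hw'
  obtain rfl : i = i' := eq_center_of_forall_mem_wedgeEdges hw'.1 hw'.2 fun f hf =>
    center_mem_of_mem_wedgeEdges (h ▸ hf)
  suffices e = e' by rw [this]
  ext j
  by_cases hji : j = i
  · simp only [hji, hw.1, hw'.1]
  · have hcard : #({i, j} : Finset V) = 2 := card_pair (Ne.symm hji)
    rw [← mk_pair_mem_wedgeEdges hcard, ← mk_pair_mem_wedgeEdges hcard, h]

theorem card_filter_mem_wedgeEdges (f : {f : Finset V // #f = 2}) :
    #{w ∈ wedges V | f ∈ wedgeEdges w.1 w.2} = 2 * (Fintype.card V - 2) := by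
  have hcenter : ∀ i, #{e ∈ (univ.erase i).powersetCard 2 | f ∈ wedgeEdges i e}
      = if i ∈ f.1 then Fintype.card V - 2 else 0 := by
    intro i
    split_ifs with hi
    · obtain ⟨j, hj⟩ := card_eq_one.1 (by rw [card_erase_of_mem hi, f.2] : #(f.1.erase i) = 1)
      have hji : j ≠ i := ne_of_mem_erase (hj ▸ mem_singleton_self j)
      have hf : f = ⟨{i, j}, card_pair hji.symm⟩ := Subtype.ext <| by
        change f.1 = insert i {j}
        rw [← hj, insert_erase hi]
      simp_rw [hf, mk_pair_mem_wedgeEdges, ← singleton_subset_iff]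
      rw [card_filter_powersetCard_subset _ _ _ (by simpa using hji) (by simp)]
      rw [card_erase_of_mem (mem_univ i), card_univ, card_singleton, Nat.choose_one_right]
      omega
    · exact card_eq_zero.2 <| filter_eq_empty_iff.2 fun e _ hf =>
        hi (center_mem_of_mem_wedgeEdges hf)
  rw [card_filter, wedges, sum_sigma]
  simp_rw [← card_filter, hcenter]
  rw [sum_ite_mem, univ_inter, sum_const, f.2, smul_eq_mul]

variable (V) in
def wedgeEdgeSets : Finset (Finset {f : Finset V // #f = 2}) :=
  (wedges V).image fun w => wedgeEdges w.1 w.2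

theorem card_of_mem_wedgeEdgeSets {S : Finset {f : Finset V // #f = 2}}
    (hS : S ∈ wedgeEdgeSets V) : #S = 2 := by
  obtain ⟨w, hw, rfl⟩ := mem_image.1 hS
  rw [mem_wedges] at hw
  rw [card_wedgeEdges hw.1, hw.2]

theorem card_filter_mem_wedgeEdgeSets (f : {f : Finset V // #f = 2}) :
    #{S ∈ wedgeEdgeSets V | f ∈ S} = 2 * (Fintype.card V - 2) := by
  rw [wedgeEdgeSets, filter_image,
    card_image_of_injOn (wedgeEdges_injOn.mono (coe_subset.2 (filter_subset _ _))),
    card_filter_mem_wedgeEdges]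

theorem card_wedgeEdgeSets :
    #(wedgeEdgeSets V) = Fintype.card V * (Fintype.card V - 1).choose 2 := by
  rw [wedgeEdgeSets, card_image_of_injOn wedgeEdges_injOn, wedges, card_sigma]
  simp [card_powersetCard, card_erase_of_mem]

theorem sum_prod_wedge_eq_sum_wedgeEdgeSets {R : Type*} [CommSemiring R] (X : Finset V → R) :
    ∑ i, ∑ e ∈ (univ.erase i).powersetCard 2, ∏ j ∈ e, X {i, j}
      = ∑ S ∈ wedgeEdgeSets V, ∏ f ∈ S, X f.1 := by
  rw [wedgeEdgeSets, sum_image wedgeEdges_injOn, wedges, sum_sigma]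
  refine sum_congr rfl fun i _ => sum_congr rfl fun e he => ?_
  rw [prod_wedgeEdges (mem_wedges.1 (mem_sigma.2 ⟨mem_univ i, he⟩)).1]

end Wedges

theorem Nat.cast_choose_three {K : Type*} [Field K] [CharZero K] (a : ℕ) :
    (a.choose 3 : K) = a * (a - 1) * (a - 2) / 6 := by
  induction a with
  | zero => simp
  | succ a ih =>
    rw [Nat.choose_succ_succ, Nat.cast_add, ih, Nat.cast_choose_two]
    push_cast
    ring

theorem stmt_12_general {Ω : Type*} [MeasurableSpace Ω] (P : Measure Ω) [IsProbabilityMeasure P]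
    (V : Type*) [Fintype V] [DecidableEq V] (N : ℕ) (hV : Fintype.card V = N)
    (hN : 3 ≤ N) (ϱ c : ℝ)
    (B C : Finset V → Ω → ℝ)
    (hBmeas : ∀ e : Finset V, e.card = 2 → Measurable (B e))
    (hCmeas : ∀ e : Finset V, e.card = 2 → Measurable (C e))
    (hB01 : ∀ e : Finset V, e.card = 2 → ∀ ω, B e ω = 0 ∨ B e ω = 1)
    (hC01 : ∀ e : Finset V, e.card = 2 → ∀ ω, C e ω = 0 ∨ C e ω = 1)
    (hindep : iIndepFun
      (fun e : {e : Finset V // e.card = 2} => fun ω => (B e.1 ω, C e.1 ω)) P)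
    (hEB : ∀ e : Finset V, e.card = 2 → ∫ ω, B e ω ∂P = ϱ)
    (hEC : ∀ e : Finset V, e.card = 2 → ∫ ω, C e ω ∂P = ϱ)
    (hEBC : ∀ e : Finset V, e.card = 2 → ∫ ω, B e ω * C e ω ∂P = c) :
    ∫ ω, (∑ i : V, ∑ e ∈ (Finset.univ.erase i).powersetCard 2,
          ∏ j ∈ e, B {i, j} ω) *
        (∑ i : V, ∑ e ∈ (Finset.univ.erase i).powersetCard 2,
          ∏ j ∈ e, C {i, j} ω) ∂P
      = (N.choose 3 : ℝ) *
        (9 * (((N - 3).choose 3 : ℝ) + 3 * ((N - 3).choose 2 : ℝ)) * ϱ ^ 4 +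
          15 * ((N : ℝ) - 3) * ϱ ^ 4 + 12 * ((N : ℝ) - 3) * ϱ ^ 2 * c +
          3 * c ^ 2 + 6 * ϱ ^ 2 * c) := by
  have abs_le_one {X : Finset V → Ω → ℝ}
      (h01 : ∀ e : Finset V, #e = 2 → ∀ ω, X e ω = 0 ∨ X e ω = 1)
      (e : {e : Finset V // #e = 2}) (ω : Ω) : |X e.1 ω| ≤ 1 := by
    rcases h01 e.1 e.2 ω with h | h <;> simp [h]
  have hB : ∀ e : {e : Finset V // #e = 2}, Measurable (B e.1) := fun e => hBmeas e.1 e.2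
  have hC : ∀ e : {e : Finset V // #e = 2}, Measurable (C e.1) := fun e => hCmeas e.1 e.2
  have hint := integrable_prod_mul_prod_of_abs_le_one (μ := P) hB hC (abs_le_one hB01)
    (abs_le_one hC01)
  have hwedge (X : Finset V → Ω → ℝ) (ω : Ω) :
      ∑ i, ∑ e ∈ (univ.erase i).powersetCard 2, ∏ j ∈ e, X {i, j} ω
        = ∑ S ∈ wedgeEdgeSets V, ∏ f ∈ S, X f.1 ω :=
    sum_prod_wedge_eq_sum_wedgeEdgeSets (X · ω)
  simp_rw [hwedge, sum_mul_sum]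
  rw [integral_finsetSum _ fun S _ => integrable_finsetSum _ fun T _ => hint S T]
  simp_rw [integral_finsetSum _ fun T _ => hint _ T, integral_prod_mul_prod_of_iIndepFun hB hC
    hindep (fun e => hEB e.1 e.2) (fun e => hEC e.1 e.2) (fun e => hEBC e.1 e.2)]
  rw [sum_sum_pow_card_sdiff_mul_pow_card_inter (fun _ => card_of_mem_wedgeEdgeSets)
    card_filter_mem_wedgeEdgeSets, card_wedgeEdgeSets, hV]
  obtain ⟨n, rfl⟩ : ∃ n, N = n + 3 := ⟨N - 3, by omega⟩
  simp only [Nat.add_sub_cancel, Nat.cast_mul, Nat.cast_choose_two, Nat.cast_choose_three]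
  push_cast
  ring

theorem stmt_12 {Ω : Type*} [MeasurableSpace Ω] (P : Measure Ω) [IsProbabilityMeasure P]
    (V : Type*) [Fintype V] [DecidableEq V] (N : ℕ) (hV : Fintype.card V = N)
    (hN : 3 ≤ N) (ϱ c : ℝ) (hϱ : ϱ ∈ Set.Icc (0:ℝ) 1) (hc : c ∈ Set.Icc (0:ℝ) 1)
    (B C : Finset V → Ω → ℝ)
    (hBmeas : ∀ e : Finset V, e.card = 2 → Measurable (B e))
    (hCmeas : ∀ e : Finset V, e.card = 2 → Measurable (C e))
    (hB01 : ∀ e : Finset V, e.card = 2 → ∀ ω, B e ω = 0 ∨ B e ω = 1)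
    (hC01 : ∀ e : Finset V, e.card = 2 → ∀ ω, C e ω = 0 ∨ C e ω = 1)
    (hindep : iIndepFun
      (fun e : {e : Finset V // e.card = 2} => fun ω => (B e.1 ω, C e.1 ω)) P)
    (hEB : ∀ e : Finset V, e.card = 2 → ∫ ω, B e ω ∂P = ϱ)
    (hEC : ∀ e : Finset V, e.card = 2 → ∫ ω, C e ω ∂P = ϱ)
    (hEBC : ∀ e : Finset V, e.card = 2 → ∫ ω, B e ω * C e ω ∂P = c) :
    ∫ ω, (∑ i : V, ∑ e ∈ (Finset.univ.erase i).powersetCard 2,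
          ∏ j ∈ e, B {i, j} ω) *
        (∑ i : V, ∑ e ∈ (Finset.univ.erase i).powersetCard 2,
          ∏ j ∈ e, C {i, j} ω) ∂P
      = (N.choose 3 : ℝ) *
        (9 * (((N - 3).choose 3 : ℝ) + 3 * ((N - 3).choose 2 : ℝ)) * ϱ ^ 4 +
          15 * ((N : ℝ) - 3) * ϱ ^ 4 + 12 * ((N : ℝ) - 3) * ϱ ^ 2 * c +
          3 * c ^ 2 + 6 * ϱ ^ 2 * c) :=
  stmt_12_general P V N hV hN ϱ c B C hBmeas hCmeas hB01 hC01 hindep hEB hEC hEBC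
end

section
/- Let f, g : ℕ → ℝ be nonnegative sequences (indexed by ℓ ≥ 1) with ∑'_{ℓ≥1} f_ℓ = 1 and ∑'_{ℓ≥1} g_ℓ = 1, with finite means μ_X := ∑'_{ℓ≥1} ℓ·f_ℓ < ∞ and μ_Y := ∑'_{ℓ≥1} ℓ·g_ℓ < ∞, and set ϱ := μ_X/(μ_X + μ_Y). Let r, s : ℕ → ℝ satisfy 0 ≤ r_k ≤ 1 and 0 ≤ s_k ≤ 1 for all k ≥ 1, the equations r_k = ∑_{ℓ=1}^{k−1} f_ℓ·s_{k−ℓ} + ∑'_{ℓ≥k} f_ℓ and s_k = ∑_{ℓ=1}^{k−1} g_ℓ·r_{k−ℓ}, and define f̄_ℓ := (∑'_{m≥ℓ} f_m)/μ_X and r^res_k := ∑_{ℓ=1}^{k−1} f̄_ℓ·s_{k−ℓ} + ∑'_{ℓ≥k} f̄_ℓ. Then for every real z with |z| < 1, writing F(z) := ∑'_{ℓ≥1} z^ℓ f_ℓ and G(z) := ∑'_{ℓ≥1} z^ℓ g_ℓ, one has (1 − z)²·μ_X·(1 − F(z)·G(z))·∑'_{k≥1} z^k·(r^res_k − ϱ)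 = z·(1 − z)·(1 − ϱ)·μ_X·(1 − F(z)·G(z)) − z²·(1 − G(z))·(1 − F(z)). -/
/-! Pass to the generating functions `∑_{k ≥ 1} z^k c_k`. The renewal equations become
`R = F S + U`, `S = G R` and `Rʳᵉˢ = F̄ S + Ū`, where `U` and `Ū` are the generating functions of
the tails `∑_{j ≥ k} f_j` and `∑_{j ≥ k} f̄_j`. Tails telescope, so `(1 - z) U = z (1 - F)` and
`(1 - z) Ū = z (1 - F̄)`, and `μX F̄ = U` by definition of `f̄`; that `f̄` is a probability density
is the identity `∑_{k ≥ 1} ∑_{j ≥ k} f_j = ∑_ℓ ℓ f_ℓ`. Eliminating `R`, `S`, `U`, `Ū`, `F̄`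
leaves the claimed identity. -/

open Finset

namespace ENNReal

theorem tsum_tsum_tail_eq_tsum_natCast_mul (F : ℕ → ℝ≥0∞) :
    ∑' k, ∑' j, F (k + 1 + j) = ∑' n : ℕ, (n : ℝ≥0∞) * F n := by
  have hfiber (k : ℕ) : ∑' j, F (k + 1 + j) = ∑' n, if k < n then F n else 0 := by
    rw [← ENNReal.summable.sum_add_tsum_nat_add' (f := fun n => if k < n then F n else 0)
      (k := k + 1)]
    have hhead : ∑ i ∈ range (k + 1), (if k < i then F i else 0) = 0 :=
      sum_eq_zero fun i hi => if_neg (by simp only [mem_range] at hi; omega)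
    rw [hhead, zero_add]
    exact tsum_congr fun j => by rw [if_pos (by omega), Nat.add_comm j]
  have hcount (n : ℕ) : ∑' k, (if k < n then F n else 0) = n * F n := by
    rw [tsum_eq_sum (s := range n) fun k hk => if_neg (by simpa using hk)]
    rw [sum_congr rfl fun k hk => if_pos (mem_range.mp hk), sum_const, card_range, nsmul_eq_mul]
  simp_rw [hfiber]
  rw [ENNReal.tsum_comm]
  exact tsum_congr hcount

end ENNReal

theorem tsum_le_tsum_natCast_mul {f : ℕ → ℝ} (hf0 : f 0 = 0) (hf : ∀ n, 0 ≤ f n)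
    (hsum : Summable f) (hmean : Summable fun n : ℕ => (n : ℝ) * f n) :
    ∑' n, f n ≤ ∑' n : ℕ, (n : ℝ) * f n := by
  refine hsum.tsum_le_tsum (fun n => ?_) hmean
  rcases n with _ | n
  · simp [hf0]
  · exact le_mul_of_one_le_left (hf _) (by simp)

theorem hasSum_tsum_tail {f : ℕ → ℝ} (hf : ∀ n, 0 ≤ f n)
    (hmean : Summable fun n : ℕ => (n : ℝ) * f n) :
    HasSum (fun k => ∑' j, f (k + 1 + j)) (∑' n : ℕ, (n : ℝ) * f n) := by
  set F : ℕ → ENNReal := fun n => ENNReal.ofReal (f n)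
  have hmean' : ∑' n : ℕ, (n : ENNReal) * F n = ENNReal.ofReal (∑' n : ℕ, (n : ℝ) * f n) := by
    rw [ENNReal.ofReal_tsum_of_nonneg (fun n => mul_nonneg n.cast_nonneg (hf n)) hmean]
    exact tsum_congr fun n => by rw [ENNReal.ofReal_mul n.cast_nonneg, ENNReal.ofReal_natCast]
  have hfin : ∑' k, ∑' j, F (k + 1 + j) ≠ ⊤ := by
    rw [ENNReal.tsum_tsum_tail_eq_tsum_natCast_mul, hmean']
    exact ENNReal.ofReal_ne_top
  have htoReal (k : ℕ) : (∑' j, F (k + 1 + j)).toReal = ∑' j, f (k + 1 + j) := by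
    rw [ENNReal.tsum_toReal_eq fun _ => ENNReal.ofReal_ne_top]
    exact tsum_congr fun j => ENNReal.toReal_ofReal (hf _)
  have h := ENNReal.hasSum_toReal hfin
  rw [← ENNReal.tsum_toReal_eq fun k => ENNReal.ne_top_of_tsum_ne_top hfin k,
    ENNReal.tsum_tsum_tail_eq_tsum_natCast_mul, hmean',
    ENNReal.toReal_ofReal (tsum_nonneg fun n => mul_nonneg n.cast_nonneg (hf n))] at h
  simpa only [htoReal] using h

theorem Summable.comp_add_left {E : Type*} [NormedAddCommGroup E] [CompleteSpace E]
    {a : ℕ → E} (ha : Summable a) (k : ℕ) :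
    Summable fun j => a (k + j) :=
  ha.comp_injective (add_right_injective k)

theorem abs_tsum_add_le {a : ℕ → ℝ} (ha : Summable a) (k : ℕ) :
    |∑' j, a (k + j)| ≤ ∑' n, |a n| := by
  have h1 : |∑' j, a (k + j)| ≤ ∑' j, |a (k + j)| := by
    simpa only [Real.norm_eq_abs] using norm_tsum_le_tsum_norm (ha.comp_add_left k).norm
  have h2 : ∑' j, |a (k + j)| ≤ ∑' n, |a n| :=
    (ha.abs.comp_add_left k).tsum_le_tsum_of_inj (k + ·)
      (add_right_injective k) (fun _ _ => abs_nonneg _) (fun _ => le_rfl) ha.abs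
  exact h1.trans h2

section PowerSeries

variable {z : ℝ}

theorem summable_pow_succ_mul_of_abs_le (hz : |z| < 1) {c : ℕ → ℝ} {C : ℝ}
    (hc : ∀ n, |c (n + 1)| ≤ C) : Summable fun n => z ^ (n + 1) * c (n + 1) := by
  refine Summable.of_norm_bounded ((summable_geometric_of_lt_one (abs_nonneg z) hz).mul_right C) ?_
  intro n
  rw [norm_mul, norm_pow, Real.norm_eq_abs, Real.norm_eq_abs, pow_succ']
  exact mul_le_mul (mul_le_of_le_one_left (by positivity) hz.le) (hc n) (abs_nonneg _)
    (by positivity)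

theorem summable_pow_mul_of_summable (hz : |z| ≤ 1) {c : ℕ → ℝ} (hc : Summable c) :
    Summable fun n => z ^ n * c n :=
  Summable.of_norm_bounded hc.norm fun n => by
    rw [norm_mul, norm_pow]
    exact mul_le_of_le_one_left (norm_nonneg _) (pow_le_one₀ (norm_nonneg _) hz)

theorem hasSum_pow_succ_mul_of_apply_zero (hz : |z| ≤ 1) {c : ℕ → ℝ} (hc0 : c 0 = 0)
    (hc : Summable c) : HasSum (fun n => z ^ (n + 1) * c (n + 1)) (∑' n, z ^ n * c n) := by
  simpa [hc0] using (hasSum_nat_add_iff' 1).mpr (summable_pow_mul_of_summable hz hc).hasSum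

theorem hasSum_pow_succ_mul_sum_Ico {a b : ℕ → ℝ} {A B : ℝ}
    (ha : HasSum (fun n => z ^ (n + 1) * a (n + 1)) A)
    (hb : HasSum (fun n => z ^ (n + 1) * b (n + 1)) B) :
    HasSum (fun n => z ^ (n + 1) * ∑ ℓ ∈ Ico 1 (n + 1), a ℓ * b (n + 1 - ℓ)) (A * B) := by
  have hprod := hasSum_sum_range_mul_of_summable_norm ha.summable.norm hb.summable.norm
  rw [ha.tsum_eq, hb.tsum_eq] at hprod
  refine (hasSum_nat_add_iff' 1).mp ?_
  simp only [range_one, sum_singleton, zero_add, Ico_self, sum_empty, mul_zero, sub_zero]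
  refine hprod.congr_fun fun n => ?_
  rw [sum_Ico_eq_sum_range, mul_sum]
  refine sum_congr (by simp) fun k hk => ?_
  obtain ⟨m, rfl⟩ := Nat.exists_eq_add_of_le (mem_range_succ_iff.mp hk)
  rw [show k + m + 1 + 1 - (1 + k) = m + 1 by omega, show k + m - k = m by omega, Nat.add_comm 1 k]
  ring

theorem summable_pow_succ_mul_tail (hz : |z| < 1) {a : ℕ → ℝ} (ha : Summable a) :
    Summable fun n => z ^ (n + 1) * ∑' j, a (n + 1 + j) :=
  summable_pow_succ_mul_of_abs_le hz (c := fun k => ∑' j, a (k + j)) fun n =>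
    abs_tsum_add_le ha (n + 1)

theorem one_sub_mul_eq_of_hasSum_tail {a : ℕ → ℝ} {T A U : ℝ}
    (ha : HasSum (fun n => a (n + 1)) T)
    (hA : HasSum (fun n => z ^ (n + 1) * a (n + 1)) A)
    (hU : HasSum (fun n => z ^ (n + 1) * ∑' j, a (n + 1 + j)) U) :
    (1 - z) * U = z * T - z * A := by
  have hsum : Summable a := (summable_nat_add_iff 1).mp ha.summable
  have hT : ∑' j, a (1 + j) = T := by
    rw [← ha.tsum_eq]
    simp only [add_comm 1]
  have hstep (n : ℕ) : ∑' j, a (n + 1 + j) = a (n + 1) + ∑' j, a (n + 2 + j) := by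
    rw [(hsum.comp_add_left (n + 1)).tsum_eq_zero_add, add_zero]
    congr 1
    exact tsum_congr fun j => by ring_nf
  have hshift : HasSum (fun n => z ^ (n + 2) * ∑' j, a (n + 2 + j)) (U - z * T) := by
    simpa [hT] using (hasSum_nat_add_iff' 1).mpr hU
  have hscaled : HasSum (fun n => z ^ (n + 2) * ∑' j, a (n + 2 + j)) (z * (U - A)) := by
    refine ((hU.sub hA).mul_left z).congr_fun fun n => ?_
    rw [hstep n]
    ring
  linear_combination hshift.unique hscaled

theorem hasSum_pow_succ_mul_of_eq_sum_Ico_add {a b c t : ℕ → ℝ} {A B T : ℝ}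
    (ha : HasSum (fun n => z ^ (n + 1) * a (n + 1)) A)
    (hb : HasSum (fun n => z ^ (n + 1) * b (n + 1)) B)
    (ht : HasSum (fun n => z ^ (n + 1) * t (n + 1)) T)
    (hc : ∀ k, 1 ≤ k → c k = (∑ ℓ ∈ Ico 1 k, a ℓ * b (k - ℓ)) + t k) :
    HasSum (fun n => z ^ (n + 1) * c (n + 1)) (A * B + T) :=
  ((hasSum_pow_succ_mul_sum_Ico ha hb).add ht).congr_fun fun n => by
    rw [hc (n + 1) n.succ_pos]
    ring

end PowerSeries

theorem stmt_15_general (f g : ℕ → ℝ) (hf0 : f 0 = 0) (hg0 : g 0 = 0)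
    (hfpos : ∀ ℓ, 0 ≤ f ℓ)
    (hfsum : Summable f) (hgsum : Summable g)
    (hftot : ∑' ℓ : ℕ, f ℓ = 1)
    (hfmean : Summable (fun ℓ : ℕ => (ℓ : ℝ) * f ℓ))
    (μX ϱ : ℝ) (hμX : μX = ∑' ℓ : ℕ, (ℓ : ℝ) * f ℓ)
    (r s : ℕ → ℝ)
    (hs01 : ∀ k, 1 ≤ k → 0 ≤ s k ∧ s k ≤ 1)
    (hr : ∀ k, 1 ≤ k →
      r k = (∑ ℓ ∈ Finset.Ico 1 k, f ℓ * s (k - ℓ)) + ∑' j : ℕ, f (k + j))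
    (hs : ∀ k, 1 ≤ k →
      s k = ∑ ℓ ∈ Finset.Ico 1 k, g ℓ * r (k - ℓ))
    (fbar rres : ℕ → ℝ)
    (hfbar : ∀ ℓ, fbar ℓ = (∑' j : ℕ, f (ℓ + j)) / μX)
    (hrres : ∀ k, 1 ≤ k →
      rres k = (∑ ℓ ∈ Finset.Ico 1 k, fbar ℓ * s (k - ℓ)) + ∑' j : ℕ, fbar (k + j))
    (z : ℝ) (hz : |z| < 1) :
    (1 - z) ^ 2 * μX *
        (1 - (∑' ℓ : ℕ, z ^ ℓ * f ℓ) * (∑' ℓ : ℕ, z ^ ℓ * g ℓ)) *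
        (∑' k : ℕ, z ^ (k + 1) * (rres (k + 1) - ϱ))
      = z * (1 - z) * (1 - ϱ) * μX *
          (1 - (∑' ℓ : ℕ, z ^ ℓ * f ℓ) * (∑' ℓ : ℕ, z ^ ℓ * g ℓ))
        - z ^ 2 * (1 - ∑' ℓ : ℕ, z ^ ℓ * g ℓ) * (1 - ∑' ℓ : ℕ, z ^ ℓ * f ℓ) := by
  have hμX_pos : 0 < μX := by
    have := tsum_le_tsum_natCast_mul hf0 hfpos hfsum hfmean
    rw [hftot, ← hμX] at this
    linarith
  set F := ∑' ℓ : ℕ, z ^ ℓ * f ℓ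
  set G := ∑' ℓ : ℕ, z ^ ℓ * g ℓ
  have hF := hasSum_pow_succ_mul_of_apply_zero hz.le hf0 hfsum
  have hG := hasSum_pow_succ_mul_of_apply_zero hz.le hg0 hgsum
  have hf_one : HasSum (fun k => f (k + 1)) 1 := by
    simpa [hf0, hftot] using (hasSum_nat_add_iff' 1).mpr hfsum.hasSum
  have hfbar_one : HasSum (fun k => fbar (k + 1)) 1 := by
    have h := (hasSum_tsum_tail hfpos hfmean).div_const μX
    rw [← hμX, div_self hμX_pos.ne'] at h
    exact h.congr_fun fun k => hfbar (k + 1)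
  have hfbar_sum : Summable fbar := (summable_nat_add_iff 1).mp hfbar_one.summable
  obtain ⟨Fb, hFb⟩ : Summable fun n => z ^ (n + 1) * fbar (n + 1) :=
    (summable_nat_add_iff 1).mpr (summable_pow_mul_of_summable hz.le hfbar_sum)
  obtain ⟨Ub, hUb⟩ := summable_pow_succ_mul_tail hz hfbar_sum
  obtain ⟨S, hS⟩ : Summable fun n => z ^ (n + 1) * s (n + 1) :=
    summable_pow_succ_mul_of_abs_le hz (C := 1) fun n => abs_le.mpr
      ⟨by linarith [(hs01 (n + 1) n.succ_pos).1], (hs01 (n + 1) n.succ_pos).2⟩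
  have hU : HasSum (fun n => z ^ (n + 1) * ∑' j, f (n + 1 + j)) (μX * Fb) :=
    (hFb.mul_left μX).congr_fun fun n => by rw [hfbar]; field_simp
  have hR := hasSum_pow_succ_mul_of_eq_sum_Ico_add (t := fun k => ∑' j, f (k + j)) hF hS hU hr
  have hGR : S = G * (F * S + μX * Fb) := hS.unique <|
    (hasSum_pow_succ_mul_sum_Ico hG hR).congr_fun fun n => by rw [hs (n + 1) n.succ_pos]
  have hRres := hasSum_pow_succ_mul_of_eq_sum_Ico_add (t := fun k => ∑' j, fbar (k + j))
    hFb hS hUb hrres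
  have hP := hRres.sub ((hasSum_geometric_of_abs_lt_one hz).mul_left (z * ϱ))
  rw [(hP.congr_fun fun n => by ring).tsum_eq]
  have hUF := one_sub_mul_eq_of_hasSum_tail hf_one hF hU
  have hUbFb := one_sub_mul_eq_of_hasSum_tail hfbar_one hFb hUb
  have hgeom : (1 - z) * ((1 - z)⁻¹ * (z * ϱ)) = z * ϱ :=
    mul_inv_cancel_left₀ (sub_pos.mpr (lt_of_abs_lt hz)).ne' (z * ϱ)
  linear_combination (-(1 - z) * μX * (1 - F * G)) * hgeom
    + ((1 - z) * μX * (1 - F * G)) * hUbFb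
    + ((1 - z) ^ 2 * μX * Fb) * hGR
    + ((1 - z) * G * μX * Fb + z * G * (1 - F) - z * (1 - F * G)) * hUF

theorem stmt_15 (f g : ℕ → ℝ) (hf0 : f 0 = 0) (hg0 : g 0 = 0)
    (hfpos : ∀ ℓ, 0 ≤ f ℓ) (hgpos : ∀ ℓ, 0 ≤ g ℓ)
    (hfsum : Summable f) (hgsum : Summable g)
    (hftot : ∑' ℓ : ℕ, f ℓ = 1) (hgtot : ∑' ℓ : ℕ, g ℓ = 1)
    (hfmean : Summable (fun ℓ : ℕ => (ℓ : ℝ) * f ℓ))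
    (hgmean : Summable (fun ℓ : ℕ => (ℓ : ℝ) * g ℓ))
    (μX μY ϱ : ℝ) (hμX : μX = ∑' ℓ : ℕ, (ℓ : ℝ) * f ℓ)
    (hμY : μY = ∑' ℓ : ℕ, (ℓ : ℝ) * g ℓ) (hϱ : ϱ = μX / (μX + μY))
    (r s : ℕ → ℝ)
    (hr01 : ∀ k, 1 ≤ k → 0 ≤ r k ∧ r k ≤ 1)
    (hs01 : ∀ k, 1 ≤ k → 0 ≤ s k ∧ s k ≤ 1)
    (hr : ∀ k, 1 ≤ k →
      r k = (∑ ℓ ∈ Finset.Ico 1 k, f ℓ * s (k - ℓ)) + ∑' j : ℕ, f (k + j))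
    (hs : ∀ k, 1 ≤ k →
      s k = ∑ ℓ ∈ Finset.Ico 1 k, g ℓ * r (k - ℓ))
    (fbar rres : ℕ → ℝ)
    (hfbar : ∀ ℓ, fbar ℓ = (∑' j : ℕ, f (ℓ + j)) / μX)
    (hrres : ∀ k, 1 ≤ k →
      rres k = (∑ ℓ ∈ Finset.Ico 1 k, fbar ℓ * s (k - ℓ)) + ∑' j : ℕ, fbar (k + j))
    (z : ℝ) (hz : |z| < 1) :
    (1 - z) ^ 2 * μX *
        (1 - (∑' ℓ : ℕ, z ^ ℓ * f ℓ) * (∑' ℓ : ℕ, z ^ ℓ * g ℓ)) *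
        (∑' k : ℕ, z ^ (k + 1) * (rres (k + 1) - ϱ))
      = z * (1 - z) * (1 - ϱ) * μX *
          (1 - (∑' ℓ : ℕ, z ^ ℓ * f ℓ) * (∑' ℓ : ℕ, z ^ ℓ * g ℓ))
        - z ^ 2 * (1 - ∑' ℓ : ℕ, z ^ ℓ * g ℓ) * (1 - ∑' ℓ : ℕ, z ^ ℓ * f ℓ) :=
  stmt_15_general f g hf0 hg0 hfpos hfsum hgsum hftot hfmean μX ϱ hμX r s hs01 hr hs fbar rres hfbar
    hrres z hz
end
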